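/- arXiv:0909.3143 — 2 statements merged into one kernel-verified Lean document; each statement's English description precedes it below -/
import Mathlib

section
/- For a partition ν = (ν_1,...,ν_l) with g(ν) = gcd(ν_1,...,ν_l), the polynomial G_ν(t) = (t A_{l−1}(t) ∏_{i=1}^l [ν_i]_t)_{g(ν)} satisfies G_ν(t) = Σ_{d | g(ν)} μ(d) d^{l−1} t^d A_{l−1}(t^d) ∏_{i=1}^l [ν_i/d]_{t^d}, where μ is the Möbius function. -/
/-!
Möbius inversion over the divisors of `g = gcd ν` writes the coprime part `f(t)_g` as
`∑_{d ∣ g} μ(d) S_d f`, where the multisection `S_d` keeps the terms whose exponent is divisible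
by `d`. For `d ∣ g` we have `[νᵢ]_t = [d]_t [νᵢ/d]_{t^d}`, and `S_d` commutes with multiplication
by series in `t^d`, so everything reduces to `S_d (t A_n(t) [d]_t^{n+1})` with `n = l - 1`.
By Euler's identity `t A_n(t) = (1 - t)^{n+1} ∑_k k^n t^k` this series equals
`(1 - t^d)^{n+1} ∑_k k^n t^k`, whose `d`-section is `(1 - t^d)^{n+1} ∑_m (dm)^n t^{dm}
= d^n t^d A_n(t^d)`. Euler's identity follows by induction from the recursion obtained by
prepending a new first letter to a permutation (`Equiv.Perm.decomposeFin`).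
-/

open Finset Equiv

/-- The excedance number `exc(σ) = |{i : σ(i) > i}|`. -/
def excNum {n : ℕ} (σ : Equiv.Perm (Fin n)) : ℕ :=
  (Finset.univ.filter fun i : Fin n => (i : ℕ) < (σ i : ℕ)).card

/-- The number of fixed points `fix(σ) = |{i : σ(i) = i}|`. -/
def fixNum {n : ℕ} (σ : Equiv.Perm (Fin n)) : ℕ :=
  (Finset.univ.filter fun i : Fin n => σ i = i).card

/-- The value `σ(i)`, with positions indexed by `0, …, n-1`. -/
def permVal {n : ℕ} (σ : Equiv.Perm (Fin n)) (i : ℕ) : ℕ :=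
  if h : i < n then (σ ⟨i, h⟩ : ℕ) else 0

/-- The descent set of `σ` (0-indexed positions). -/
def desSet {n : ℕ} (σ : Equiv.Perm (Fin n)) : Finset ℕ :=
  (Finset.range (n - 1)).filter fun i => permVal σ (i + 1) < permVal σ i

/-- The descent number `des(σ)`. -/
def desNum {n : ℕ} (σ : Equiv.Perm (Fin n)) : ℕ := (desSet σ).card

/-- The major index `maj(σ) = Σ_{i ∈ Des(σ)} i` (with positions counted `1, …, n-1`). -/
def majNum {n : ℕ} (σ : Equiv.Perm (Fin n)) : ℕ := ∑ i ∈ desSet σ, (i + 1)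

/-- The Eulerian polynomial `A_n(t) = Σ_{σ ∈ S_n} t^{exc(σ)}`. -/
noncomputable def eulerianExc (n : ℕ) : Polynomial ℚ :=
  ∑ σ : Equiv.Perm (Fin n), Polynomial.X ^ excNum σ

/-- The Eulerian polynomial `A_n(t) = Σ_{σ ∈ S_n} t^{des(σ)}`. -/
noncomputable def eulerianDes (n : ℕ) : Polynomial ℚ :=
  ∑ σ : Equiv.Perm (Fin n), Polynomial.X ^ desNum σ

/-- The operation `f(t) ↦ f(t)_m` erasing all terms `a_j t^j` with `gcd(j, m) ≠ 1`. -/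
noncomputable def restrictCoprime (m : ℕ) (f : Polynomial ℚ) : Polynomial ℚ :=
  ∑ j ∈ f.support.filter (fun j => Nat.gcd j m = 1), Polynomial.monomial j (f.coeff j)

open scoped Polynomial PowerSeries

namespace PowerSeries

section CommSemiring

variable {R : Type*} [CommSemiring R]

noncomputable def multisect (d : ℕ) (f : R⟦X⟧) : R⟦X⟧ :=
  mk fun k => if d ∣ k then coeff k f else 0

@[simp]
lemma coeff_multisect (d k : ℕ) (f : R⟦X⟧) :
    coeff k (multisect d f) = if d ∣ k then coeff k f else 0 :=
  coeff_mk _ _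

/-- The polylogarithm `Li_{-n}(X)`. -/
noncomputable def negPolylog (n : ℕ) : R⟦X⟧ :=
  mk fun k => if k = 0 then 0 else (k : R) ^ n

lemma negPolylog_succ (n : ℕ) : negPolylog (n + 1) = X * d⁄dX R (negPolylog n) := by
  ext (_ | k)
  · simp [negPolylog]
  · rw [coeff_succ_X_mul, coeff_derivative]
    simp [negPolylog, pow_succ, mul_comm]

end CommSemiring

variable {R : Type*} [CommRing R]

lemma multisect_expand_mul {d : ℕ} (hd : d ≠ 0) (f g : R⟦X⟧) :
    multisect d (expand d hd f * g) = expand d hd f * multisect d g := by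
  ext k
  simp only [coeff_multisect, coeff_mul, mul_ite, mul_zero]
  rw [Finset.ite_sum_zero]
  refine Finset.sum_congr rfl fun p hp => ?_
  rw [← Finset.HasAntidiagonal.mem_antidiagonal.mp hp]
  by_cases h₁ : d ∣ p.1
  · simp only [Nat.dvd_add_right h₁]
  · simp [coeff_expand_of_not_dvd d hd f h₁]

lemma expand_coe {d : ℕ} (hd : d ≠ 0) (p : R[X]) :
    expand d hd (p : R⟦X⟧) = (Polynomial.expand R d p : R[X]) := by
  ext k
  rw [coeff_expand, Polynomial.coeff_coe, Polynomial.coeff_coe,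
    Polynomial.coeff_expand (Nat.pos_of_ne_zero hd)]

lemma coe_comp_X_pow {d : ℕ} (hd : d ≠ 0) (p : R[X]) :
    ((p.comp (Polynomial.X ^ d) : R[X]) : R⟦X⟧) = expand d hd p := by
  rw [expand_coe, Polynomial.expand_eq_comp_X_pow]

lemma one_sub_X_mul_negPolylog_zero : (1 - X) * negPolylog 0 = (X : R⟦X⟧) := by
  ext (_ | _ | k) <;> simp [sub_mul, coeff_succ_X_mul, negPolylog, coeff_X]

lemma multisect_negPolylog {d : ℕ} (hd : d ≠ 0) (n : ℕ) :
    multisect d (negPolylog n : R⟦X⟧) = C ((d : R) ^ n) * expand d hd (negPolylog n) := by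
  ext k
  rw [coeff_multisect, coeff_C_mul, coeff_expand]
  split_ifs with hk
  · obtain ⟨m, rfl⟩ := hk
    simp [negPolylog, hd, Nat.mul_div_cancel_left m (Nat.pos_of_ne_zero hd), mul_pow]
  · rw [mul_zero]

end PowerSeries

lemma geom_sum_range_mul {R : Type*} [CommSemiring R] (x : R) (d m : ℕ) :
    ∑ j ∈ range (d * m), x ^ j = (∑ j ∈ range d, x ^ j) * ∑ j ∈ range m, (x ^ d) ^ j := by
  induction m with
  | zero => simp
  | succ m ih =>
    rw [Nat.mul_succ, sum_range_add, ih, sum_range_succ, mul_add]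
    congr 1
    rw [sum_mul]
    exact sum_congr rfl fun j _ => by ring

lemma sum_divisors_moebius {R : Type*} [Ring R] (n : ℕ) :
    ∑ d ∈ n.divisors, (ArithmeticFunction.moebius d : R) = if n = 1 then 1 else 0 := by
  simpa only [ArithmeticFunction.coe_mul_zeta_apply, ArithmeticFunction.one_apply,
    ArithmeticFunction.intCoe_apply] using
    congrArg (· n) (ArithmeticFunction.coe_moebius_mul_coe_zeta (R := R))

lemma excNum_eq_sum {n : ℕ} (σ : Perm (Fin n)) :
    excNum σ = ∑ i : Fin n, if (i : ℕ) < σ i then 1 else 0 := by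
  rw [excNum, card_filter]

lemma excNum_decomposeFin_symm_zero {n : ℕ} (e : Perm (Fin n)) :
    excNum (Perm.decomposeFin.symm (0, e)) = excNum e := by
  rw [excNum_eq_sum, excNum_eq_sum, Fin.sum_univ_succ]
  simp [Perm.decomposeFin_symm_apply_succ]

-- `decomposeFin.symm (q + 1, e)` sends `0 ↦ q + 1`, a new excedance, and `e⁻¹ q + 1 ↦ 0`,
-- removing the excedance of `e` at `e⁻¹ q` if there was one; elsewhere it shifts `e` by one.
lemma excNum_decomposeFin_symm_succ {n : ℕ} (e : Perm (Fin n)) (q : Fin n) :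
    excNum (Perm.decomposeFin.symm (q.succ, e)) + (if (e.symm q : ℕ) < q then 1 else 0)
      = excNum e + 1 := by
  have hshift : ∀ i : Fin n,
      (if (i.succ : ℕ) < Perm.decomposeFin.symm (q.succ, e) i.succ then 1 else 0)
        = if e i ≠ q ∧ (i : ℕ) < e i then 1 else 0 := by
    intro i
    rw [Perm.decomposeFin_symm_apply_succ]
    by_cases h : e i = q
    · simp [h]
    · rw [swap_apply_of_ne_of_ne (Fin.succ_ne_zero _) (fun h' => h (Fin.succ_injective _ h'))]
      simp [h]
  have hsplit : ∀ i : Fin n, (if (i : ℕ) < e i then 1 else 0)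
      = (if e i ≠ q ∧ (i : ℕ) < e i then 1 else 0)
        + (if i = e.symm q then if (i : ℕ) < e i then 1 else 0 else 0) := by
    intro i
    split_ifs <;> simp_all [Equiv.eq_symm_apply]
  rw [excNum_eq_sum, Fin.sum_univ_succ, Perm.decomposeFin_symm_apply_zero,
    sum_congr rfl fun i _ => hshift i, excNum_eq_sum, sum_congr rfl fun i _ => hsplit i,
    sum_add_distrib, sum_ite_eq', if_pos (mem_univ _), apply_symm_apply, Fin.val_zero,
    Fin.val_succ, if_pos (Nat.succ_pos q)]
  ring

lemma sum_ite_symm_lt_eq_excNum {n : ℕ} (e : Perm (Fin n)) :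
    ∑ q : Fin n, (if (e.symm q : ℕ) < q then 1 else 0) = excNum e := by
  rw [excNum_eq_sum, ← Equiv.sum_comp e]
  simp

lemma sum_X_pow_excNum_decomposeFin_symm {n : ℕ} (e : Perm (Fin n)) :
    ∑ p : Fin (n + 1), (Polynomial.X : ℚ[X]) ^ excNum (Perm.decomposeFin.symm (p, e))
      = ((excNum e : ℚ[X]) + 1) * Polynomial.X ^ excNum e
        + ((n : ℚ[X]) - (excNum e : ℚ[X])) * Polynomial.X ^ (excNum e + 1) := by
  set k := excNum e
  have hsucc : ∀ q : Fin n, (Polynomial.X : ℚ[X]) ^ excNum (Perm.decomposeFin.symm (q.succ, e))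
      = Polynomial.X ^ (k + 1)
        + ((if (e.symm q : ℕ) < q then 1 else 0 : ℕ) : ℚ[X])
          * (Polynomial.X ^ k - Polynomial.X ^ (k + 1)) := by
    intro q
    have h := excNum_decomposeFin_symm_succ e q
    split_ifs at h ⊢
    · rw [show excNum (Perm.decomposeFin.symm (q.succ, e)) = k by omega]
      ring
    · rw [show excNum (Perm.decomposeFin.symm (q.succ, e)) = k + 1 by omega]
      ring
  rw [Fin.sum_univ_succ, excNum_decomposeFin_symm_zero, sum_congr rfl fun q _ => hsucc q,
    sum_add_distrib, ← sum_mul, ← Nat.cast_sum, sum_ite_symm_lt_eq_excNum, sum_const, card_univ,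
    Fintype.card_fin, nsmul_eq_mul]
  ring

lemma eulerianExc_zero : eulerianExc 0 = 1 := by
  simp [eulerianExc, excNum]

lemma eulerianExc_succ (n : ℕ) :
    eulerianExc (n + 1) = ∑ e : Perm (Fin n), (((excNum e : ℚ[X]) + 1) * Polynomial.X ^ excNum e
        + ((n : ℚ[X]) - (excNum e : ℚ[X])) * Polynomial.X ^ (excNum e + 1)) := by
  rw [eulerianExc, ← Perm.decomposeFin.symm.sum_comp, Fintype.sum_prod_type, sum_comm]
  exact sum_congr rfl fun e _ => sum_X_pow_excNum_decomposeFin_symm e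

lemma X_mul_eulerianExc_succ (n : ℕ) :
    Polynomial.X * eulerianExc (n + 1)
      = Polynomial.X * (1 - Polynomial.X) * Polynomial.derivative (Polynomial.X * eulerianExc n)
        + ((n : ℚ[X]) + 1) * Polynomial.X * (Polynomial.X * eulerianExc n) := by
  rw [eulerianExc_succ]
  simp only [eulerianExc, mul_sum, map_sum, ← sum_add_distrib, ← pow_succ',
    Polynomial.derivative_X_pow, Polynomial.C_eq_natCast]
  refine sum_congr rfl fun e _ => ?_
  push_cast
  ring

theorem coe_X_mul_eulerianExc (n : ℕ) :
    ((Polynomial.X * eulerianExc n : ℚ[X]) : ℚ⟦X⟧)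
      = (1 - PowerSeries.X) ^ (n + 1) * PowerSeries.negPolylog n := by
  induction n with
  | zero =>
    rw [eulerianExc_zero, mul_one, Polynomial.coe_X, zero_add, pow_one,
      PowerSeries.one_sub_X_mul_negPolylog_zero]
  | succ n ih =>
    have hD : d⁄dX ℚ ((1 - PowerSeries.X : ℚ⟦X⟧) ^ (n + 1))
        = -(((n : ℚ⟦X⟧) + 1) * (1 - PowerSeries.X) ^ n) := by
      simp [Derivation.leibniz_pow]
    have hn : ((n : ℚ[X]) : ℚ⟦X⟧) = n := map_natCast Polynomial.coeToPowerSeries.ringHom n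
    rw [X_mul_eulerianExc_succ]
    push_cast [← PowerSeries.derivative_coe, ih, hn]
    rw [PowerSeries.negPolylog_succ, Derivation.leibniz, hD, smul_eq_mul, smul_eq_mul]
    ring

theorem multisect_coe_X_mul_eulerianExc_mul_geom_sum_pow {d : ℕ} (hd : d ≠ 0) (n : ℕ) :
    PowerSeries.multisect d
        ((Polynomial.X * eulerianExc n * (∑ j ∈ range d, Polynomial.X ^ j) ^ (n + 1) : ℚ[X]) : ℚ⟦X⟧)
      = PowerSeries.C ((d : ℚ) ^ n)
        * ((Polynomial.X ^ d * (eulerianExc n).comp (Polynomial.X ^ d) : ℚ[X]) : ℚ⟦X⟧) := by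
  have hgeom : ((∑ j ∈ range d, Polynomial.X ^ j : ℚ[X]) : ℚ⟦X⟧) * (1 - PowerSeries.X)
      = 1 - PowerSeries.X ^ d := by
    rw [← Polynomial.coe_X, ← Polynomial.coe_one, ← Polynomial.coe_sub, ← Polynomial.coe_mul,
      geom_sum_mul_neg, Polynomial.coe_sub, Polynomial.coe_pow]
  have hcomp : Polynomial.X ^ d * (eulerianExc n).comp (Polynomial.X ^ d)
      = (Polynomial.X * eulerianExc n).comp (Polynomial.X ^ d) := by
    rw [Polynomial.mul_comp, Polynomial.X_comp]
  have hcoe : ((Polynomial.X * eulerianExc n * (∑ j ∈ range d, Polynomial.X ^ j) ^ (n + 1)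
        : ℚ[X]) : ℚ⟦X⟧)
      = PowerSeries.expand d hd ((1 - PowerSeries.X) ^ (n + 1)) * PowerSeries.negPolylog n := by
    rw [map_pow, map_sub, map_one, PowerSeries.expand_X, ← hgeom, mul_pow, Polynomial.coe_mul,
      Polynomial.coe_pow, coe_X_mul_eulerianExc]
    ring
  rw [hcoe, PowerSeries.multisect_expand_mul, PowerSeries.multisect_negPolylog hd, hcomp,
    PowerSeries.coe_comp_X_pow hd, coe_X_mul_eulerianExc, map_mul]
  ring

lemma coeff_restrictCoprime (m k : ℕ) (f : ℚ[X]) :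
    (restrictCoprime m f).coeff k = if k.gcd m = 1 then f.coeff k else 0 := by
  by_cases hk : f.coeff k = 0 <;> simp [restrictCoprime, Polynomial.coeff_monomial, hk]

lemma coe_restrictCoprime {m : ℕ} (hm : m ≠ 0) (f : ℚ[X]) :
    (restrictCoprime m f : ℚ⟦X⟧)
      = ∑ d ∈ m.divisors,
          PowerSeries.C (ArithmeticFunction.moebius d : ℚ) * PowerSeries.multisect d f := by
  ext k
  have hdiv : {d ∈ m.divisors | d ∣ k} = (k.gcd m).divisors := by
    rw [← Nat.divisors_filter_dvd_of_dvd hm (Nat.gcd_dvd_right k m)]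
    exact filter_congr fun d hd =>
      (Nat.dvd_gcd_iff.trans (and_iff_left (Nat.dvd_of_mem_divisors hd))).symm
  rw [Polynomial.coeff_coe, coeff_restrictCoprime, map_sum]
  simp only [PowerSeries.coeff_C_mul, PowerSeries.coeff_multisect, Polynomial.coeff_coe, mul_ite,
    mul_zero]
  rw [← sum_filter, hdiv, ← sum_mul, sum_divisors_moebius]
  split_ifs <;> simp

/-- For a partition `ν = (ν₁, …, ν_l)` (a finite sequence of positive integers) with
`g(ν) = gcd(ν₁, …, ν_l)`, the polynomial `G_ν(t) = (t A_{l−1}(t) ∏ᵢ [νᵢ]_t)_{g(ν)}`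
satisfies `G_ν(t) = Σ_{d ∣ g(ν)} μ(d) d^{l−1} t^d A_{l−1}(t^d) ∏ᵢ [νᵢ/d]_{t^d}`,
where `μ` is the Möbius function. -/
theorem Gnu_moebius_expansion (l : ℕ) (hl : 0 < l) (ν : Fin l → ℕ) (hν : ∀ i, 0 < ν i) :
    restrictCoprime (Finset.univ.gcd ν)
        (Polynomial.X * eulerianExc (l - 1) *
          ∏ i, (∑ j ∈ Finset.range (ν i), Polynomial.X ^ j)) =
      ∑ d ∈ (Finset.univ.gcd ν).divisors,
        Polynomial.C (((ArithmeticFunction.moebius d : ℤ) : ℚ) * (d : ℚ) ^ (l - 1)) *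
          Polynomial.X ^ d * (eulerianExc (l - 1)).comp (Polynomial.X ^ d) *
          ∏ i, (∑ j ∈ Finset.range (ν i / d), (Polynomial.X ^ d) ^ j) := by
  have hg : univ.gcd ν ≠ 0 := fun h => (hν ⟨0, hl⟩).ne' (gcd_eq_zero_iff.mp h _ (mem_univ _))
  rw [← Polynomial.coe_inj, coe_restrictCoprime hg]
  refine (sum_congr rfl fun d hd => ?_).trans
    (map_sum Polynomial.coeToPowerSeries.ringHom _ _).symm
  have hd0 : d ≠ 0 := Nat.ne_of_gt (Nat.pos_of_mem_divisors hd)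
  have hdν : ∀ i, d ∣ ν i := fun i => (Nat.dvd_of_mem_divisors hd).trans (gcd_dvd (mem_univ i))
  have hprod : ∏ i, ∑ j ∈ range (ν i), (Polynomial.X : ℚ[X]) ^ j
      = (∏ i, ∑ j ∈ range (ν i / d), (Polynomial.X ^ d) ^ j)
        * (∑ j ∈ range d, Polynomial.X ^ j) ^ (l - 1 + 1) := by
    rw [Nat.sub_add_cancel hl, ← Fin.prod_const l, ← prod_mul_distrib]
    exact prod_congr rfl fun i _ => by
      rw [mul_comm, ← geom_sum_range_mul, Nat.mul_div_cancel' (hdν i)]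
  have hcomp : ∏ i, ∑ j ∈ range (ν i / d), ((Polynomial.X : ℚ[X]) ^ d) ^ j
      = (∏ i, ∑ j ∈ range (ν i / d), Polynomial.X ^ j).comp (Polynomial.X ^ d) := by
    simp only [Polynomial.prod_comp, Polynomial.sum_comp, Polynomial.pow_comp, Polynomial.X_comp]
  rw [hprod, hcomp, mul_left_comm, Polynomial.coeToPowerSeries.ringHom_apply, Polynomial.coe_mul,
    PowerSeries.coe_comp_X_pow hd0, PowerSeries.multisect_expand_mul,
    multisect_coe_X_mul_eulerianExc_mul_geom_sum_pow hd0, ← PowerSeries.coe_comp_X_pow hd0]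
  simp only [Polynomial.coe_mul, Polynomial.coe_C, Polynomial.coe_pow, Polynomial.coe_X, map_mul]
  ring
end

section
/- Let n = dk. Then Σ_{σ ∈ C_{S_n}(γ_n^k)} t^{exc(σ)} s^{fix(σ)} = A_k^{exc,fix}(t, (s^d + t[d−1]_t)/[d]_t) · [d]_t^k, where A_k^{exc,fix}(t,r) = Σ_{ρ ∈ S_k} t^{exc(ρ)} r^{fix(ρ)}, γ_n = (1,...,n) ∈ S_n, and [m]_t = 1 + t + ⋯ + t^{m−1}. -/
/-
Write `i ∈ Fin (d * k)` as `i = r + k * j` with `r < k`, `j < d` (`finProdFinEquiv`). Then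
`γ^k` fixes the residue `r` and shifts the block coordinate `j ↦ j + 1` cyclically, so the
permutations commuting with it are exactly `σ (j, r) = (c r + j, ρ r)` with `ρ ∈ S_k` and
`c : Fin k → ℤ/d`. Positions are ordered lexicographically by `(j, r)`, so the `d` positions with
residue `r` contribute `-c r` excedances (read in `0, …, d - 1`), plus `d` more if `c r = 0` and
`r < ρ r`, and `d` fixed points if `c r = 0` and `ρ r = r`. Summing over `c r` independently for
each `r` gives `s^d + t[d-1]_t` for a fixed point of `ρ`, `t[d]_t` for an excedance of `ρ` and
`[d]_t` otherwise; their product over `r` is the term of `ρ` on the right-hand side.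
-/

open Finset Equiv

attribute [local instance] Classical.propDecidable

section WreathPerm

variable {d : ℕ} [NeZero d] {α : Type*}

variable (d α) in
def cycleShift : Perm (Fin d × α) :=
  Equiv.prodCongr (Equiv.addRight 1) (Equiv.refl α)

@[simp]
lemma cycleShift_apply (p : Fin d × α) : cycleShift d α p = (p.1 + 1, p.2) := rfl

def wreathPerm (ρ : Perm α) (c : α → Fin d) : Perm (Fin d × α) where
  toFun p := (c p.2 + p.1, ρ p.2)
  invFun p := (p.1 - c (ρ.symm p.2), ρ.symm p.2)
  left_inv p := by simp
  right_inv p := by simp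

@[simp]
lemma wreathPerm_apply (ρ : Perm α) (c : α → Fin d) (p : Fin d × α) :
    wreathPerm ρ c p = (c p.2 + p.1, ρ p.2) := rfl

lemma wreathPerm_injective :
    Function.Injective fun p : Perm α × (α → Fin d) => wreathPerm p.1 p.2 := by
  rintro ⟨ρ, c⟩ ⟨ρ', c'⟩ h
  have h₀ (r : α) := Prod.ext_iff.mp (congr($h (0, r)))
  simp only [wreathPerm_apply, add_zero] at h₀
  exact Prod.ext (Equiv.ext fun r => (h₀ r).2) (funext fun r => (h₀ r).1)

lemma wreathPerm_commute_cycleShift (ρ : Perm α) (c : α → Fin d) :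
    Commute (wreathPerm ρ c) (cycleShift d α) := by
  ext p : 1
  simp [Perm.mul_apply, add_assoc]

open Fin.NatCast in
lemma commute_cycleShift_iff [Finite α] {σ : Perm (Fin d × α)} :
    Commute σ (cycleShift d α) ↔ ∃ ρ c, wreathPerm ρ c = σ := by
  refine ⟨fun hσ => ?_, fun ⟨ρ, c, hσ⟩ => hσ ▸ wreathPerm_commute_cycleShift ρ c⟩
  set c : α → Fin d := fun r => (σ (0, r)).1
  set ρ₀ : α → α := fun r => (σ (0, r)).2
  have hstep (p : Fin d × α) : σ (p.1 + 1, p.2) = ((σ p).1 + 1, (σ p).2) :=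
    congr($hσ.eq p)
  have hσ_apply (r : α) (m : ℕ) : σ (m, r) = (c r + m, ρ₀ r) := by
    induction m with
    | zero => simp [c, ρ₀]
    | succ m ih => rw [Nat.cast_succ, hstep (m, r), ih, add_assoc]
  have hρ₀ : Function.Injective ρ₀ := by
    intro r r' h
    have hzero (r : α) : σ (((-c r : Fin d) : ℕ), r) = (0, ρ₀ r) := by
      rw [hσ_apply, Fin.cast_val_eq_self, add_neg_cancel]
    exact congrArg Prod.snd (σ.injective ((hzero r).trans (h ▸ (hzero r').symm)))
  refine ⟨Equiv.ofBijective ρ₀ (Finite.injective_iff_bijective.mp hρ₀), c, ?_⟩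
  ext ⟨j, r⟩ : 1
  rw [← Fin.cast_val_eq_self j, hσ_apply]
  rfl

end WreathPerm

lemma coe_finRotate_pow_apply {n : ℕ} (m : ℕ) (i : Fin n) :
    ((finRotate n ^ m) i : ℕ) = (i + m) % n := by
  induction m with
  | zero => simp [Nat.mod_eq_of_lt i.isLt]
  | succ m ih =>
    have := i.neZero
    rw [pow_succ', Perm.mul_apply, finRotate_apply, Fin.val_add, ih, Fin.val_one',
      Nat.mod_add_mod, Nat.add_mod_mod, add_assoc]

lemma finRotate_pow_eq_permCongr {d k : ℕ} [NeZero d] :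
    finRotate (d * k) ^ k = finProdFinEquiv.permCongr (cycleShift d (Fin k)) := by
  ext i
  obtain ⟨⟨j, r⟩, rfl⟩ := finProdFinEquiv.surjective i
  have hr : ((r : ℕ) + k * (j + 1)) % k = r := by
    rw [Nat.add_mul_mod_self_left, Nat.mod_eq_of_lt r.isLt]
  have hj : ((r : ℕ) + k * (j + 1)) / k = j + 1 := by
    rw [Nat.add_mul_div_left _ _ (Nat.zero_lt_of_lt r.isLt), Nat.div_eq_of_lt r.isLt, zero_add]
  rw [Equiv.permCongr_apply, Equiv.symm_apply_apply, cycleShift_apply, coe_finRotate_pow_apply,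
    finProdFinEquiv_apply_val, finProdFinEquiv_apply_val, mul_comm d, Nat.mod_mul,
    add_assoc, ← mul_add_one, hr, hj, Fin.val_add, Fin.val_one']
  simp

lemma mem_centralizer_finRotate_pow_iff {d k : ℕ} [NeZero d] {σ : Perm (Fin (d * k))} :
    σ ∈ Subgroup.centralizer {finRotate (d * k) ^ k} ↔
      ∃ p : Perm (Fin k) × (Fin k → Fin d),
        finProdFinEquiv.permCongr (wreathPerm p.1 p.2) = σ := by
  obtain ⟨τ, rfl⟩ := finProdFinEquiv.permCongr.surjective σ
  rw [Subgroup.mem_centralizer_singleton_iff, finRotate_pow_eq_permCongr,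
    ← Equiv.permCongr_mul, ← Equiv.permCongr_mul, finProdFinEquiv.permCongr.injective.eq_iff]
  simp only [finProdFinEquiv.permCongr.injective.eq_iff, Prod.exists]
  exact commute_cycleShift_iff

lemma sum_centralizer_finRotate_pow {M : Type*} [AddCommMonoid M] {d k : ℕ} [NeZero d]
    (f : Perm (Fin (d * k)) → M) :
    ∑ σ ∈ univ.filter (fun σ : Perm (Fin (d * k)) =>
        σ ∈ Subgroup.centralizer {finRotate (d * k) ^ k}), f σ =
      ∑ p : Perm (Fin k) × (Fin k → Fin d), f (finProdFinEquiv.permCongr (wreathPerm p.1 p.2)) := by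
  symm
  refine Finset.sum_nbij (fun p => finProdFinEquiv.permCongr (wreathPerm p.1 p.2))
    ?_ ?_ ?_ fun _ _ => rfl
  · exact fun p _ => mem_filter.2 ⟨mem_univ _, mem_centralizer_finRotate_pow_iff.2 ⟨p, rfl⟩⟩
  · exact fun p _ q _ h => wreathPerm_injective (finProdFinEquiv.permCongr.injective h)
  · intro σ hσ
    obtain ⟨p, hp⟩ := mem_centralizer_finRotate_pow_iff.1 (mem_filter.1 hσ).2
    exact ⟨p, mem_coe.2 (mem_univ p), hp⟩

lemma finProdFinEquiv_lt_finProdFinEquiv_iff {m n : ℕ} {p q : Fin m × Fin n} :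
    finProdFinEquiv p < finProdFinEquiv q ↔ toLex p < toLex q := by
  obtain ⟨⟨j, hj⟩, ⟨r, hr⟩⟩ := p
  obtain ⟨⟨j', hj'⟩, ⟨r', hr'⟩⟩ := q
  simp only [Fin.lt_def, finProdFinEquiv_apply_val, Prod.Lex.toLex_lt_toLex, Fin.mk.injEq]
  rcases lt_trichotomy j j' with h | rfl | h
  · have : r + n * j < r' + n * j' := by nlinarith
    simp [this, h]
  · simp
  · have : r' + n * j' < r + n * j := by nlinarith
    simp [this.not_gt, h.not_gt, h.ne']

lemma excNum_permCongr_finProdFinEquiv {m n : ℕ} (τ : Perm (Fin m × Fin n)) :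
    excNum (finProdFinEquiv.permCongr τ) = #{p | toLex p < toLex (τ p)} := by
  refine (Finset.card_equiv finProdFinEquiv fun p => ?_).symm
  rw [mem_filter, mem_filter, Equiv.permCongr_apply, Equiv.symm_apply_apply, ← Fin.lt_def,
    finProdFinEquiv_lt_finProdFinEquiv_iff]
  simp

lemma fixNum_permCongr {α : Type*} [Fintype α] {n : ℕ} (e : α ≃ Fin n) (τ : Perm α) :
    fixNum (e.permCongr τ) = #{p | τ p = p} := by
  refine (Finset.card_equiv e fun p => ?_).symm
  rw [mem_filter, mem_filter, Equiv.permCongr_apply, Equiv.symm_apply_apply,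
    e.apply_eq_iff_eq]
  simp

lemma card_filter_prod_eq_sum {ι α : Type*} [Fintype ι] [Fintype α] (P : ι × α → Prop)
    [DecidablePred P] : #{p | P p} = ∑ r, #{j | P (j, r)} := by
  simp only [card_filter, Fintype.sum_prod_type_right]

section BlockCounts

variable {d : ℕ} [NeZero d]

lemma card_filter_lt_add_self (c : Fin d) : #{j : Fin d | j < c + j} = ((-c : Fin d) : ℕ) := by
  rw [Fin.val_neg]
  split_ifs with hc
  · simp [hc]
  have hc₀ : 0 < (c : ℕ) := Fin.pos_iff_ne_zero.2 hc
  calc #{j : Fin d | j < c + j} = #{j : Fin d | (j : ℕ) < d - c} := by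
        congr 1
        ext j
        simp only [mem_filter, mem_univ, true_and, Fin.lt_def, Fin.val_add_eq_ite]
        have := c.isLt
        split_ifs <;> omega
    _ = d - c := by rw [Fin.card_filter_val_lt]; omega

variable {α : Type*} [LinearOrder α]

lemma card_filter_toLex_lt_add (c : Fin d) (r r' : α) :
    #{j : Fin d | toLex (j, r) < toLex (c + j, r')} =
      ((-c : Fin d) : ℕ) + if c = 0 ∧ r < r' then d else 0 := by
  by_cases hc : c = 0
  · subst hc
    by_cases h : r < r' <;> simp [h, Prod.Lex.toLex_lt_toLex]
  · rw [if_neg (fun h => hc h.1), add_zero, ← card_filter_lt_add_self]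
    congr 1
    ext j
    simp [hc, Prod.Lex.toLex_lt_toLex]

lemma card_filter_add_mk_eq_mk (c : Fin d) (r r' : α) :
    #{j : Fin d | (c + j, r') = (j, r)} = if c = 0 ∧ r' = r then d else 0 := by
  simp only [Prod.mk.injEq, add_eq_right]
  split_ifs with h <;> simp [h]

end BlockCounts

section Statistics

variable {d k : ℕ} [NeZero d]

lemma excNum_wreathPerm (ρ : Perm (Fin k)) (c : Fin k → Fin d) :
    excNum (finProdFinEquiv.permCongr (wreathPerm ρ c)) =
      ∑ r, (((-c r : Fin d) : ℕ) + if c r = 0 ∧ r < ρ r then d else 0) := by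
  rw [excNum_permCongr_finProdFinEquiv, card_filter_prod_eq_sum]
  refine sum_congr rfl fun r _ => ?_
  -- the two sides differ in their `Decidable` instances: `Classical.propDecidable` is in force
  convert card_filter_toLex_lt_add (c r) r (ρ r) using 2
  · ext; rfl
  · congr!

lemma fixNum_wreathPerm (ρ : Perm (Fin k)) (c : Fin k → Fin d) :
    fixNum (finProdFinEquiv.permCongr (wreathPerm ρ c)) =
      ∑ r, if c r = 0 ∧ ρ r = r then d else 0 := by
  rw [fixNum_permCongr, card_filter_prod_eq_sum]
  refine sum_congr rfl fun r _ => ?_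
  convert card_filter_add_mk_eq_mk (c r) r (ρ r) using 2
  ext
  simp

end Statistics

section GeneratingFunction

variable {R : Type*} [CommSemiring R] {d k : ℕ} [NeZero d]

lemma sum_wreathPerm_weight (t s : R) (ρ : Perm (Fin k)) :
    ∑ c : Fin k → Fin d,
        t ^ excNum (finProdFinEquiv.permCongr (wreathPerm ρ c)) *
          s ^ fixNum (finProdFinEquiv.permCongr (wreathPerm ρ c)) =
      ∏ r, ∑ x : Fin d, t ^ (((-x : Fin d) : ℕ) + if x = 0 ∧ r < ρ r then d else 0) *
        s ^ (if x = 0 ∧ ρ r = r then d else 0) := by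
  rw [Fintype.prod_sum]
  refine sum_congr rfl fun c _ => ?_
  rw [excNum_wreathPerm, fixNum_wreathPerm, ← prod_pow_eq_pow_sum, ← prod_pow_eq_pow_sum,
    ← prod_mul_distrib]

lemma sum_ite_eq_zero_pow_neg (t x : R) :
    ∑ c : Fin d, (if c = 0 then x else t ^ ((-c : Fin d) : ℕ)) =
      x + t * ∑ i ∈ range (d - 1), t ^ i := by
  obtain ⟨m, rfl⟩ := Nat.exists_eq_add_one_of_ne_zero (NeZero.ne d)
  rw [← Equiv.sum_comp (Equiv.neg _), Fin.sum_univ_succ, mul_sum,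
    ← Fin.sum_univ_eq_sum_range (fun i => t * t ^ i)]
  simp [pow_succ']

lemma sum_block_weight (t s : R) {P Q : Prop} [Decidable P] [Decidable Q] (hPQ : ¬(P ∧ Q)) :
    ∑ x : Fin d, t ^ (((-x : Fin d) : ℕ) + if x = 0 ∧ Q then d else 0) *
        s ^ (if x = 0 ∧ P then d else 0) =
      (if P then s ^ d + t * ∑ i ∈ range (d - 1), t ^ i else ∑ i ∈ range d, t ^ i) *
        (if Q then t else 1) := by
  have hsummand (x : Fin d) :
      t ^ (((-x : Fin d) : ℕ) + if x = 0 ∧ Q then d else 0) * s ^ (if x = 0 ∧ P then d else 0) =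
        if x = 0 then t ^ (if Q then d else 0) * s ^ (if P then d else 0)
        else t ^ ((-x : Fin d) : ℕ) := by
    by_cases hx : x = 0 <;> simp [hx]
  simp only [hsummand, sum_ite_eq_zero_pow_neg]
  obtain ⟨m, rfl⟩ := Nat.exists_eq_add_one_of_ne_zero (NeZero.ne d)
  by_cases hP : P
  · simp [hP, show ¬Q from fun hQ => hPQ ⟨hP, hQ⟩]
  by_cases hQ : Q
  · simp [hP, hQ, sum_range_succ]
    ring
  · simp [hP, hQ, sum_range_succ', mul_sum, pow_succ', add_comm]

lemma prod_ite_fixed_mul_ite_exc (t b g : R) (ρ : Perm (Fin k)) :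
    ∏ r, (if ρ r = r then b else g) * (if r < ρ r then t else 1) =
      t ^ excNum ρ * b ^ fixNum ρ * g ^ (k - fixNum ρ) := by
  have hcompl : #{r | ¬ρ r = r} = k - fixNum ρ := by
    have := card_filter_add_card_filter_not (s := univ) (fun r => ρ r = r)
    rw [card_univ, Fintype.card_fin] at this
    rw [fixNum]
    omega
  rw [prod_mul_distrib, prod_ite, prod_ite, prod_const, prod_const, prod_const, prod_const_one,
    mul_one, hcompl, mul_comm, ← mul_assoc]
  rfl

end GeneratingFunction

theorem centralizer_exc_fix_sum_general (d k : ℕ) (hd : 0 < d) :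
    ∑ σ ∈ Finset.univ.filter (fun σ : Equiv.Perm (Fin (d * k)) =>
        σ ∈ Subgroup.centralizer {finRotate (d * k) ^ k}),
      (MvPolynomial.X 0 : MvPolynomial (Fin 2) ℚ) ^ excNum σ *
        MvPolynomial.X 1 ^ fixNum σ =
    ∑ ρ : Equiv.Perm (Fin k),
      (MvPolynomial.X 0 : MvPolynomial (Fin 2) ℚ) ^ excNum ρ *
        (MvPolynomial.X 1 ^ d +
          MvPolynomial.X 0 * ∑ i ∈ Finset.range (d - 1), MvPolynomial.X 0 ^ i) ^ fixNum ρ *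
        (∑ i ∈ Finset.range d, (MvPolynomial.X 0 : MvPolynomial (Fin 2) ℚ) ^ i) ^
          (k - fixNum ρ) := by
  have : NeZero d := ⟨hd.ne'⟩
  rw [sum_centralizer_finRotate_pow, Fintype.sum_prod_type]
  refine sum_congr rfl fun ρ _ => ?_
  rw [sum_wreathPerm_weight, ← prod_ite_fixed_mul_ite_exc]
  exact prod_congr rfl fun r _ => sum_block_weight _ _ fun h => h.2.ne' h.1

/-- Let `n = d·k`.  Then
`Σ_{σ ∈ C_{S_n}(γ_n^k)} t^{exc(σ)} s^{fix(σ)} = A_k^{exc,fix}(t, (s^d + t[d−1]_t)/[d]_t) ⋅ [d]_t^k`,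
where `A_k^{exc,fix}(t,r) = Σ_{ρ ∈ S_k} t^{exc(ρ)} r^{fix(ρ)}` and `γ_n = (1,…,n)`; the
right-hand side is written in the cleared (polynomial) form
`Σ_{ρ ∈ S_k} t^{exc(ρ)} (s^d + t[d−1]_t)^{fix(ρ)} [d]_t^{k−fix(ρ)}`, an identity in
`ℚ[t,s]` with `t = X 0`, `s = X 1`. -/
theorem centralizer_exc_fix_sum (d k : ℕ) (hd : 0 < d) (hk : 0 < k) :
    ∑ σ ∈ Finset.univ.filter (fun σ : Equiv.Perm (Fin (d * k)) =>
        σ ∈ Subgroup.centralizer {finRotate (d * k) ^ k}),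
      (MvPolynomial.X 0 : MvPolynomial (Fin 2) ℚ) ^ excNum σ *
        MvPolynomial.X 1 ^ fixNum σ =
    ∑ ρ : Equiv.Perm (Fin k),
      (MvPolynomial.X 0 : MvPolynomial (Fin 2) ℚ) ^ excNum ρ *
        (MvPolynomial.X 1 ^ d +
          MvPolynomial.X 0 * ∑ i ∈ Finset.range (d - 1), MvPolynomial.X 0 ^ i) ^ fixNum ρ *
        (∑ i ∈ Finset.range d, (MvPolynomial.X 0 : MvPolynomial (Fin 2) ℚ) ^ i) ^
          (k - fixNum ρ) :=
  centralizer_exc_fix_sum_general d k hd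
end
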